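/- Let p > q ≥ 1 be coprime integers, let q' be the unique integer with 1 ≤ q' ≤ p/2 and q·q' ≡ ±1 (mod p), and let w_0, …, w_p be the (p,q)-sequence of words in the free group F = ⟨z,y⟩. Then w_{q'} is a primitive element of F. More precisely, if qq' ≡ 1 (mod p) then w_{q'} equals the Osborne–Zieschang word w(q', p−q'), and if qq' ≡ −1 (mod p) then w_{q'} is a cyclic permutation of w(q', p−q'). -/

import Mathlib

/-- An element of the free group `F = ⟨z, y⟩` (generator `true` = `z`,
`false` = `y`) is *primitive* if it belongs to some generating pair of `F`. -/
def IsPrimitive (w : FreeGroup Bool) : Prop :=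
  ∃ w' : FreeGroup Bool, Subgroup.closure {w, w'} = ⊤

/-- The word in `F = ⟨z, y⟩` spelled by a list of letters (`true` ↦ `z`, `false` ↦ `y`). -/
def wordOf (L : List Bool) : FreeGroup Bool :=
  (L.map fun b => FreeGroup.of b).prod

/-- Letters of the word `w_j` of the `(p,q)`-sequence. -/
def pqLetters (p q j : ℕ) : List Bool :=
  (List.range p).map fun i =>
    decide (∃ n ∈ Finset.range j, (i + 1) % p = (1 + n * q) % p)

/-- Letters of the Osborne–Zieschang word `w(m, n)`. -/
def ozLetters (m n : ℕ) : List Bool :=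
  (List.range (m + n)).map fun k => decide ((1 + k * m) % (m + n) ∈ Finset.Icc 1 m)

/-!
For `q q' ≡ ±1 (mod p)`, the congruence `i ≡ n q` is equivalent to `i q' ≡ ±n`, so up to a
rotation `w_{q'}` is the coding `rotationWord q' p` of the rotation `x ↦ x + q'` of `ℤ/p` by the
interval `[0, q')`, and so is `w(q', p - q')`. Such codings are primitive by a Euclidean descent:
inducing the rotation on the complement of a suitable interval gives a rotation of a smaller
circle, whose coding is carried to the original one by one of the automorphisms `z ↦ zy`,
`y ↦ yz` of `F`; conjugation and automorphisms preserve primitivity.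
-/

def orbitCode {α : Type*} (T : α → α) (c : α → Bool) (x : α) (n : ℕ) : List Bool :=
  (List.range n).map fun k => c (T^[k] x)

section orbitCode

variable {α β : Type*} (T : α → α) (c : α → Bool)

@[simp]
theorem orbitCode_zero (x : α) : orbitCode T c x 0 = [] := rfl

theorem orbitCode_succ (x : α) (n : ℕ) :
    orbitCode T c x (n + 1) = c x :: orbitCode T c (T x) n := by
  simp [orbitCode, List.range_succ_eq_map, Function.iterate_succ_apply]

theorem orbitCode_add (x : α) (a b : ℕ) :
    orbitCode T c x (a + b) = orbitCode T c x a ++ orbitCode T c (T^[a] x) b := by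
  induction a generalizing x with
  | zero => simp
  | succ a ih => rw [Nat.add_right_comm, orbitCode_succ, orbitCode_succ, ih]; rfl

/-- `S` is the map induced by `T` on the image of `φ`, and `σ` records the letters read by `T`
between two visits to that image. -/
theorem flatMap_orbitCode (S : β → β) (d : β → Bool) (φ : β → α) (σ : Bool → List Bool)
    (P : β → Prop) (hS : ∀ y, P y → P (S y))
    (hφ : ∀ y, P y → orbitCode T c (φ y) (σ (d y)).length = σ (d y) ∧
      T^[(σ (d y)).length] (φ y) = φ (S y)) (n : ℕ) {y : β} (hy : P y) :
    (orbitCode S d y n).flatMap σ =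
      orbitCode T c (φ y) ((orbitCode S d y n).flatMap σ).length := by
  induction n generalizing y with
  | zero => simp
  | succ n ih =>
    obtain ⟨hblock, hnext⟩ := hφ y hy
    rw [orbitCode_succ, List.flatMap_cons, List.length_append, orbitCode_add, hblock, hnext,
      ← ih (hS y hy)]

end orbitCode

theorem List.length_flatMap_bool {α : Type*} (σ : Bool → List α) (w : List Bool) :
    (w.flatMap σ).length =
      w.count true * (σ true).length + w.count false * (σ false).length := by
  induction w with
  | nil => simp
  | cons b w ih => cases b <;> simp [ih] <;> ring

-- The rotation `x ↦ x + m` of `ℤ/p`, acting on the representatives `x < p`.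
def rotateBy (m p x : ℕ) : ℕ := if x + m < p then x + m else x + m - p

theorem rotateBy_iterate_zero {m p : ℕ} (hmp : m ≤ p) (k : ℕ) :
    (rotateBy m p)^[k] 0 = k * m % p := by
  induction k with
  | zero => simp
  | succ k ih =>
    rcases Nat.eq_zero_or_pos p with rfl | hp
    · simp_all [rotateBy]
    rw [Function.iterate_succ_apply', ih, rotateBy, add_one_mul, ← Nat.mod_add_mod (k * m)]
    have hr := Nat.mod_lt (k * m) hp
    split_ifs with h
    · exact (Nat.mod_eq_of_lt h).symm
    · rw [Nat.mod_eq_sub_mod (not_lt.mp h), Nat.mod_eq_of_lt (a := _ - p) (by omega)]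

def rotationWord (m p : ℕ) : List Bool := (List.range p).map fun k => decide (k * m % p < m)

@[simp]
theorem length_rotationWord (m p : ℕ) : (rotationWord m p).length = p := by
  simp [rotationWord]

theorem rotationWord_eq_orbitCode {m p : ℕ} (hmp : m ≤ p) :
    rotationWord m p = orbitCode (rotateBy m p) (fun x => decide (x < m)) 0 p := by
  simp [rotationWord, orbitCode, rotateBy_iterate_zero hmp]

theorem count_true_rotationWord {m p : ℕ} (hmp : m ≤ p) (hcop : m.Coprime p) :
    (rotationWord m p).count true = m := by
  have hinj : ∀ a ∈ List.range p, ∀ b ∈ List.range p, a * m % p = b * m % p → a = b := by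
    intro a ha b hb hab
    have := Nat.ModEq.cancel_right_of_coprime (Nat.coprime_comm.mp hcop) hab
    rwa [Nat.ModEq, Nat.mod_eq_of_lt (List.mem_range.mp ha),
      Nat.mod_eq_of_lt (List.mem_range.mp hb)] at this
  have hperm : List.Perm ((List.range p).map (fun k => k * m % p)) (List.range p) := by
    refine (List.subperm_of_subset (List.nodup_range.map_on hinj) ?_).perm_of_length_le (by simp)
    intro x hx
    obtain ⟨a, ha, rfl⟩ := List.mem_map.mp hx
    exact List.mem_range.mpr (Nat.mod_lt _ (Nat.zero_lt_of_lt (List.mem_range.mp ha)))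
  calc (rotationWord m p).count true
      = (((List.range p).map (fun k => k * m % p)).map fun r => decide (r < m)).count true := by
        simp [rotationWord, Function.comp_def]
    _ = ((List.range p).map fun r => decide (r < m)).count true := ((hperm.map _).count_eq _)
    _ = m := by
      obtain ⟨d, rfl⟩ := Nat.exists_eq_add_of_le hmp
      rw [List.range_add, List.map_append, List.count_append, List.map_map]
      have h1 : (List.range m).map (fun r => decide (r < m)) = List.replicate m true := by
        simp [List.eq_replicate_iff]
      have h2 : (List.range d).map ((fun r => decide (r < m)) ∘ (m + ·)) =
          List.replicate d false := by
        simp [List.eq_replicate_iff]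
      simp [h1, h2, List.count_replicate]

def zToZY : Bool → List Bool
  | true => [true, false]
  | false => [false]

def yToYZ : Bool → List Bool
  | true => [true]
  | false => [false, true]

-- The rotation by `m` mod `p` induced on the complement of `[m, 2m)` is the rotation by `m`
-- mod `p - m`.
theorem rotationWord_eq_flatMap_zToZY {m p : ℕ} (h2m : 2 * m ≤ p) (hcop : m.Coprime (p - m)) :
    rotationWord m p = (rotationWord m (p - m)).flatMap zToZY := by
  set n := p - m with hn
  have hn0 : 0 < n := Nat.pos_of_ne_zero fun h0 => by
    rw [h0, Nat.coprime_zero_right] at hcop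
    omega
  have hlen : ((rotationWord m n).flatMap zToZY).length = p := by
    have hcount := List.count_true_add_count_false (rotationWord m n)
    rw [count_true_rotationWord (by omega) hcop, length_rotationWord] at hcount
    rw [List.length_flatMap_bool, count_true_rotationWord (by omega) hcop]
    simp only [zToZY, List.length_cons, List.length_nil]
    omega
  rw [rotationWord_eq_orbitCode (show m ≤ n by omega)] at hlen ⊢
  rw [rotationWord_eq_orbitCode (show m ≤ p by omega),
    flatMap_orbitCode (rotateBy m p) (fun x => decide (x < m)) (rotateBy m n)
      (fun x => decide (x < m)) (fun y => if y < m then y else y + m) zToZY (· < n) ?_ ?_ n hn0,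
    hlen]
  · split_ifs <;> simp_all
  · intro y hy
    simp only [rotateBy]
    split_ifs <;> omega
  · intro y hy
    by_cases hym : y < m <;> simp [hym, zToZY, orbitCode_succ, rotateBy] <;> split_ifs <;> omega

-- The rotation by `m` mod `p` induced on the complement of `[2m - p, m)` is the rotation by
-- `2m - p` mod `m`.
theorem rotationWord_eq_flatMap_yToYZ {m p : ℕ} (hmp : m ≤ p) (h2m : p < 2 * m)
    (hcop : (2 * m - p).Coprime m) :
    rotationWord m p = (rotationWord (2 * m - p) m).flatMap yToYZ := by
  set a := 2 * m - p with ha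
  have hlen : ((rotationWord a m).flatMap yToYZ).length = p := by
    have hcount := List.count_true_add_count_false (rotationWord a m)
    rw [count_true_rotationWord (by omega) hcop, length_rotationWord] at hcount
    rw [List.length_flatMap_bool, count_true_rotationWord (by omega) hcop]
    simp only [yToYZ, List.length_cons, List.length_nil]
    omega
  rw [rotationWord_eq_orbitCode (show a ≤ m by omega)] at hlen ⊢
  rw [rotationWord_eq_orbitCode hmp,
    flatMap_orbitCode (rotateBy m p) (fun x => decide (x < m)) (rotateBy a m)
      (fun x => decide (x < a)) (fun y => if y < a then y else y + (p - m)) yToYZ (· < m) ?_ ?_ m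
      (by omega), hlen]
  · split_ifs <;> simp_all
  · intro y hy
    simp only [rotateBy]
    split_ifs <;> omega
  · intro y hy
    by_cases hya : y < a <;> simp [hya, yToYZ, orbitCode_succ, rotateBy] <;> split_ifs <;> omega

theorem wordOf_append (v w : List Bool) : wordOf (v ++ w) = wordOf v * wordOf w := by
  simp [wordOf]

theorem wordOf_cons (b : Bool) (w : List Bool) :
    wordOf (b :: w) = FreeGroup.of b * wordOf w := by
  simp [wordOf]

def substHom (σ : Bool → List Bool) : FreeGroup Bool →* FreeGroup Bool :=
  FreeGroup.lift fun b => wordOf (σ b)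

theorem substHom_wordOf (σ : Bool → List Bool) (w : List Bool) :
    substHom σ (wordOf w) = wordOf (w.flatMap σ) := by
  induction w with
  | nil => simp [wordOf]
  | cons b w ih =>
    rw [wordOf_cons, map_mul, ih, List.flatMap_cons, wordOf_append, substHom,
      FreeGroup.lift_apply_of]

theorem surjective_substHom_zToZY : Function.Surjective (substHom zToZY) := by
  have : (substHom zToZY).comp (FreeGroup.lift fun b =>
      if b then FreeGroup.of true * (FreeGroup.of false)⁻¹ else FreeGroup.of false) =
      MonoidHom.id _ :=
    FreeGroup.ext_hom _ _ (by rintro (_ | _) <;> simp [substHom, zToZY, wordOf])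
  exact fun w => ⟨_, DFunLike.congr_fun this w⟩

theorem surjective_substHom_yToYZ : Function.Surjective (substHom yToYZ) := by
  have : (substHom yToYZ).comp (FreeGroup.lift fun b =>
      if b then FreeGroup.of true else FreeGroup.of false * (FreeGroup.of true)⁻¹) =
      MonoidHom.id _ :=
    FreeGroup.ext_hom _ _ (by rintro (_ | _) <;> simp [substHom, yToYZ, wordOf])
  exact fun w => ⟨_, DFunLike.congr_fun this w⟩

theorem IsPrimitive.map_of_surjective {f : FreeGroup Bool →* FreeGroup Bool}
    (hf : Function.Surjective f) {w : FreeGroup Bool} (h : IsPrimitive w) :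
    IsPrimitive (f w) := by
  obtain ⟨w', hw⟩ := h
  refine ⟨f w', ?_⟩
  rw [← Set.image_pair, ← MonoidHom.map_closure, hw, Subgroup.map_top_of_surjective f hf]

theorem IsPrimitive.of_isConj {v w : FreeGroup Bool} (hvw : IsConj v w) (hv : IsPrimitive v) :
    IsPrimitive w := by
  obtain ⟨c, rfl⟩ := isConj_iff.mp hvw
  exact hv.map_of_surjective (f := (MulAut.conj c).toMonoidHom) (MulAut.conj c).surjective

theorem List.IsRotated.isConj_wordOf {v w : List Bool} (h : v ~r w) :
    IsConj (wordOf v) (wordOf w) := by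
  obtain ⟨k, rfl⟩ := h
  induction k with
  | zero => rw [List.rotate_zero]
  | succ k ih =>
    refine ih.trans ?_
    rw [← List.rotate_rotate]
    cases v.rotate k with
    | nil => rw [List.rotate_nil]
    | cons b w =>
      refine isConj_iff.mpr ⟨(FreeGroup.of b)⁻¹, ?_⟩
      simp [wordOf]

theorem isPrimitive_of_true : IsPrimitive (FreeGroup.of true) := by
  refine ⟨FreeGroup.of false, eq_top_iff.mpr ?_⟩
  rw [← FreeGroup.closure_range_of]
  refine Subgroup.closure_mono ?_
  rintro _ ⟨(_ | _), rfl⟩ <;> simp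

theorem isPrimitive_wordOf_rotationWord {m p : ℕ} (hm : 0 < m) (hmp : m ≤ p)
    (hcop : m.Coprime p) : IsPrimitive (wordOf (rotationWord m p)) := by
  induction p using Nat.strong_induction_on generalizing m with
  | _ p ih =>
    rcases hmp.eq_or_lt with rfl | hlt
    · obtain rfl : m = 1 := by simpa using hcop
      simpa [rotationWord, wordOf] using isPrimitive_of_true
    by_cases h2m : 2 * m ≤ p
    · have hcop' : m.Coprime (p - m) := (Nat.coprime_sub_self_right hmp).mpr hcop
      rw [rotationWord_eq_flatMap_zToZY h2m hcop', ← substHom_wordOf]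
      exact (ih (p - m) (by omega) hm (by omega) hcop').map_of_surjective
        surjective_substHom_zToZY
    · have hcop' : (2 * m - p).Coprime m := by
        rw [show 2 * m - p = m - (p - m) by omega, Nat.coprime_self_sub_left (by omega),
          Nat.coprime_sub_self_left hmp]
        exact hcop.symm
      rw [rotationWord_eq_flatMap_yToYZ hmp (by omega) hcop', ← substHom_wordOf]
      exact (ih m hlt (by omega) (by omega) hcop').map_of_surjective surjective_substHom_yToYZ

theorem ozLetters_eq_rotationWord (m : ℕ) {n : ℕ} (hn : 0 < n) :
    ozLetters m n = rotationWord m (m + n) := by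
  refine List.map_congr_left fun k _ => decide_eq_decide.mpr ?_
  have hr := Nat.mod_lt (k * m) (show 0 < m + n by omega)
  rw [Finset.mem_Icc, ← Nat.add_mod_mod]
  rcases Nat.lt_or_ge (1 + k * m % (m + n)) (m + n) with h | h
  · rw [Nat.mod_eq_of_lt h]
    omega
  · rw [show 1 + k * m % (m + n) = m + n by omega, Nat.mod_self]
    omega

theorem pqLetters_eq_map (p q j : ℕ) :
    pqLetters p q j =
      (List.range p).map fun i : ℕ => decide (∃ n < j, (i : ZMod p) = n * q) := by
  refine List.map_congr_left fun i _ => decide_eq_decide.mpr ?_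
  simp only [Finset.mem_range, ← ZMod.natCast_eq_natCast_iff', Nat.cast_add, Nat.cast_mul,
    Nat.cast_one, add_comm (i : ZMod p), add_left_cancel_iff]

theorem exists_lt_eq_natCast_mul_iff_val_mul_lt {p : ℕ} [NeZero p] {q q' : ZMod p}
    (h : q * q' = 1) {j : ℕ} (hj : j ≤ p) (x : ZMod p) :
    (∃ n < j, x = n * q) ↔ (x * q').val < j := by
  constructor
  · rintro ⟨n, hn, rfl⟩
    rwa [mul_assoc, h, mul_one, ZMod.val_natCast, Nat.mod_eq_of_lt (by omega)]
  · intro hx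
    refine ⟨_, hx, ?_⟩
    rw [ZMod.natCast_zmod_val]
    linear_combination (-x) * h

theorem exists_lt_eq_natCast_mul_iff_val_mul_add_lt {p : ℕ} [NeZero p] {q q' : ZMod p}
    (h : q * q' = -1) {j : ℕ} (hj : j ≤ p) (x : ZMod p) :
    (∃ n < j, x = n * q) ↔ (x * q' + (j - 1 : ℕ)).val < j := by
  constructor
  · rintro ⟨n, hn, rfl⟩
    have : (n : ZMod p) * q * q' + (j - 1 : ℕ) = (j - 1 - n : ℕ) := by
      rw [Nat.cast_sub (show n ≤ j - 1 by omega)]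
      linear_combination (n : ZMod p) * h
    rw [this, ZMod.val_natCast, Nat.mod_eq_of_lt (by omega)]
    omega
  · intro hx
    refine ⟨j - 1 - (x * q' + (j - 1 : ℕ)).val, by omega, ?_⟩
    rw [Nat.cast_sub (by omega), ZMod.natCast_zmod_val]
    linear_combination x * h

theorem pqLetters_eq_rotationWord {p q q' : ℕ} (hp : 0 < p) (h : (q : ZMod p) * q' = 1)
    (hq' : q' ≤ p) : pqLetters p q q' = rotationWord q' p := by
  have : NeZero p := ⟨hp.ne'⟩
  rw [pqLetters_eq_map]
  refine List.map_congr_left fun i _ => decide_eq_decide.mpr ?_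
  rw [exists_lt_eq_natCast_mul_iff_val_mul_lt h hq', ← Nat.cast_mul, ZMod.val_natCast]

theorem rotationWord_isRotated_pqLetters {p q q' : ℕ} (hp : 0 < p) (h : (q : ZMod p) * q' = -1)
    (hq' : q' ≤ p) : rotationWord q' p ~r pqLetters p q q' := by
  have : NeZero p := ⟨hp.ne'⟩
  set s := (((q' - 1 : ℕ) : ZMod p) * -q).val
  have hs : (s : ZMod p) * q' = (q' - 1 : ℕ) := by
    rw [ZMod.natCast_zmod_val]
    linear_combination (-((q' - 1 : ℕ) : ZMod p)) * h
  refine ⟨s, List.ext_getElem (by simp [pqLetters]) fun i hi _ => ?_⟩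
  simp only [rotationWord, pqLetters_eq_map, List.getElem_rotate, List.getElem_map,
    List.getElem_range, List.length_map, List.length_range]
  rw [decide_eq_decide, exists_lt_eq_natCast_mul_iff_val_mul_add_lt h hq', ← hs,
    ← ZMod.val_natCast, show (((i + s) % p * q' : ℕ) : ZMod p) = i * q' + s * q' by
    push_cast [ZMod.natCast_mod]
    ring]

theorem pqSequence_q'_primitive_general (p q q' : ℕ) (hq'1 : 1 ≤ q') (hq'2 : 2 * q' ≤ p)
    (hqq' : ((q * q' : ℕ) : ℤ) ≡ 1 [ZMOD (p : ℤ)] ∨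
            ((q * q' : ℕ) : ℤ) ≡ -1 [ZMOD (p : ℤ)]) :
    IsPrimitive (wordOf (pqLetters p q q')) ∧
    (((q * q' : ℕ) : ℤ) ≡ 1 [ZMOD (p : ℤ)] →
      pqLetters p q q' = ozLetters q' (p - q')) ∧
    (((q * q' : ℕ) : ℤ) ≡ -1 [ZMOD (p : ℤ)] →
      pqLetters p q q' ~r ozLetters q' (p - q')) := by
  have hp : 0 < p := by omega
  have hone (h : ((q * q' : ℕ) : ℤ) ≡ 1 [ZMOD p]) : (q : ZMod p) * q' = 1 := by
    simpa using (ZMod.intCast_eq_intCast_iff _ _ _).mpr h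
  have hneg (h : ((q * q' : ℕ) : ℤ) ≡ -1 [ZMOD p]) : (q : ZMod p) * q' = -1 := by
    simpa using (ZMod.intCast_eq_intCast_iff _ _ _).mpr h
  have hoz : ozLetters q' (p - q') = rotationWord q' p := by
    rw [ozLetters_eq_rotationWord q' (by omega : 0 < p - q'), Nat.add_sub_cancel' (by omega)]
  have hcop : q'.Coprime p := by
    rw [← ZMod.isUnit_iff_coprime]
    rcases hqq' with h | h
    · exact IsUnit.of_mul_eq_one_right _ (hone h)
    · exact IsUnit.of_mul_eq_one_right (-(q : ZMod p)) (by rw [neg_mul, hneg h, neg_neg])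
  have hprim := isPrimitive_wordOf_rotationWord hq'1 (by omega) hcop
  have hrot (h : ((q * q' : ℕ) : ℤ) ≡ -1 [ZMOD p]) : rotationWord q' p ~r pqLetters p q q' :=
    rotationWord_isRotated_pqLetters hp (hneg h) (by omega)
  refine ⟨?_, fun h => hoz ▸ pqLetters_eq_rotationWord hp (hone h) (by omega),
    fun h => hoz ▸ (hrot h).symm⟩
  rcases hqq' with h | h
  · rw [pqLetters_eq_rotationWord hp (hone h) (by omega)]
    exact hprim
  · exact hprim.of_isConj (hrot h).isConj_wordOf

/-- For coprime `p > q ≥ 1` and the unique `q'` with `1 ≤ q' ≤ p/2` and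
`q·q' ≡ ±1 (mod p)`, the word `w_{q'}` of the `(p,q)`-sequence is primitive;
more precisely, if `qq' ≡ 1 (mod p)` then `w_{q'}` equals the Osborne–Zieschang
word `w(q', p−q')`, and if `qq' ≡ −1 (mod p)` then `w_{q'}` is a cyclic
permutation of `w(q', p−q')`. -/
theorem pqSequence_q'_primitive (p q q' : ℕ) (hq : 1 ≤ q) (hqp : q < p)
    (hcop : Nat.Coprime p q) (hq'1 : 1 ≤ q') (hq'2 : 2 * q' ≤ p)
    (hqq' : ((q * q' : ℕ) : ℤ) ≡ 1 [ZMOD (p : ℤ)] ∨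
            ((q * q' : ℕ) : ℤ) ≡ -1 [ZMOD (p : ℤ)]) :
    IsPrimitive (wordOf (pqLetters p q q')) ∧
    (((q * q' : ℕ) : ℤ) ≡ 1 [ZMOD (p : ℤ)] →
      pqLetters p q q' = ozLetters q' (p - q')) ∧
    (((q * q' : ℕ) : ℤ) ≡ -1 [ZMOD (p : ℤ)] →
      pqLetters p q q' ~r ozLetters q' (p - q')) :=
  pqSequence_q'_primitive_general p q q' hq'1 hq'2 hqq'
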